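/- arXiv:1301.6385 — 5 statements merged into one kernel-verified Lean document; each statement's English description precedes it below -/
import Mathlib

section
/- Let X be a real random variable with characteristic function Ψ_X(u) = E[e^{iuX}]. Then Ψ_X(u) → 0 as |u| → ∞ if and only if the law of the fractional part {X} = X - ⌊X⌋, viewed as a measure on [0,1), has Fourier coefficients ∫ e^{2πinx} dμ(x) tending to 0 as |n| → ∞. -/
/-!
Since `e^{2πinX} = e^{2πin{X}}`, the Fourier coefficients of the law `ν` of `{X}` are the values
`Ψ_X(2πn)`, which gives one direction. Conversely, if `ν` is Rajchman then so is `φ ν` for every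
`φ ∈ L¹(ν)`, because trigonometric polynomials are dense in `L¹(ν)`. Conditioning on `{X}` writes
`Ψ_X(2πn + s) = E[e^{2πin{X}} e^{isX}]` as a Fourier coefficient of such a measure, so it tends
to `0` for each fixed `s`. As `Ψ_X` is uniformly continuous, the functions
`s ↦ Ψ_X(2π(n + s))` on `[0, 1]` are equicontinuous, so this convergence is uniform in `s`, and
every `u` is of the form `2π(n + s)`.
-/

open MeasureTheory Filter

open Complex Set Topology Submodule
open scoped Real

theorem norm_fourier_apply {T : ℝ} (n : ℤ) (x : AddCircle T) : ‖fourier n x‖ = 1 :=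
  Circle.norm_coe _

section

variable {T : ℝ}

theorem integrable_fourier_comp_mul {α : Type*} [MeasurableSpace α] {μ : Measure α}
    {Y : α → AddCircle T} (hY : Measurable Y) (n : ℤ) {g : α → ℂ} (hg : Integrable g μ) :
    Integrable (fun x => fourier n (Y x) * g x) μ :=
  hg.bdd_mul ((map_continuous _).measurable.comp hY).aestronglyMeasurable
    (ae_of_all _ fun _ => (norm_fourier_apply _ _).le)

theorem integrable_fourier_mul (n : ℤ) {φ : AddCircle T → ℂ} {ν : Measure (AddCircle T)}
    (hφ : Integrable φ ν) :
    Integrable (fun x => fourier n x * φ x) ν :=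
  integrable_fourier_comp_mul measurable_id n hφ

theorem dist_integral_fourier_mul_le (n : ℤ) {ν : Measure (AddCircle T)} (φ ψ : Lp ℂ 1 ν) :
    dist (∫ x, fourier n x * φ x ∂ν) (∫ x, fourier n x * ψ x ∂ν) ≤ dist φ ψ := by
  rw [dist_eq_norm, dist_eq_norm, L1.norm_eq_integral_norm,
    ← integral_sub (integrable_fourier_mul n (L1.integrable_coeFn φ))
      (integrable_fourier_mul n (L1.integrable_coeFn ψ))]
  refine (norm_integral_le_integral_norm _).trans_eq (integral_congr_ae ?_)
  filter_upwards [Lp.coeFn_sub φ ψ] with x hx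
  rw [hx, Pi.sub_apply, ← mul_sub, norm_mul, norm_fourier_apply, one_mul]

end

namespace MeasureTheory.Measure

def IsRajchman {T : ℝ} (ν : Measure (AddCircle T)) : Prop :=
  Tendsto (fun n : ℤ => ∫ x, fourier n x ∂ν) (cocompact ℤ) (𝓝 0)

variable {T : ℝ} {ν : Measure (AddCircle T)}

theorem IsRajchman.tendsto_integral_fourier_mul_fourier (h : ν.IsRajchman) (m : ℤ) :
    Tendsto (fun n => ∫ x, fourier n x * fourier m x ∂ν) (cocompact ℤ) (𝓝 0) := by
  simp_rw [← fourier_add]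
  exact h.comp (Homeomorph.addRight m).isClosedEmbedding.tendsto_cocompact

variable [Fact (0 < T)] [IsFiniteMeasure ν]

theorem span_toLp_fourier_closure_eq_top :
    (span ℂ (range fun n => ContinuousMap.toLp 1 ν ℂ (fourier n))).topologicalClosure = ⊤ := by
  convert! (ContinuousMap.toLp_denseRange ℂ ν ℂ ENNReal.one_ne_top).topologicalClosure_map_submodule
    span_fourier_closure_eq_top
  rw [map_span, ← range_comp]
  rfl

theorem IsRajchman.tendsto_integral_fourier_mul_of_mem_span (h : ν.IsRajchman) {φ : Lp ℂ 1 ν}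
    (hφ : φ ∈ span ℂ (range fun m => ContinuousMap.toLp 1 ν ℂ (fourier m))) :
    Tendsto (fun n => ∫ x, fourier n x * φ x ∂ν) (cocompact ℤ) (𝓝 0) := by
  induction hφ using span_induction with
  | mem φ hφ =>
    obtain ⟨m, rfl⟩ := hφ
    refine (h.tendsto_integral_fourier_mul_fourier m).congr fun n => integral_congr_ae ?_
    filter_upwards [ContinuousMap.coeFn_toLp (p := 1) (𝕜 := ℂ) ν (fourier m)] with x hx
    rw [hx]
  | zero =>
    refine tendsto_const_nhds.congr fun n => ((integral_congr_ae ?_).trans (integral_zero _ _)).symm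
    filter_upwards [Lp.coeFn_zero ℂ 1 ν] with x hx
    rw [hx, Pi.zero_apply, mul_zero]
  | add φ ψ _ _ hφ hψ =>
    refine (zero_add (0 : ℂ) ▸ hφ.add hψ).congr fun n => ?_
    rw [← integral_add (integrable_fourier_mul n (L1.integrable_coeFn φ))
      (integrable_fourier_mul n (L1.integrable_coeFn ψ))]
    refine integral_congr_ae ?_
    filter_upwards [Lp.coeFn_add φ ψ] with x hx
    rw [hx, Pi.add_apply, mul_add]
  | smul c φ _ hφ =>
    refine (mul_zero c ▸ hφ.const_mul c).congr fun n => ?_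
    rw [← integral_const_mul]
    refine integral_congr_ae ?_
    filter_upwards [Lp.coeFn_smul c φ] with x hx
    rw [hx, Pi.smul_apply, smul_eq_mul, mul_left_comm]

theorem IsRajchman.tendsto_integral_fourier_mul_L1 (h : ν.IsRajchman) (φ : Lp ℂ 1 ν) :
    Tendsto (fun n => ∫ x, fourier n x * φ x ∂ν) (cocompact ℤ) (𝓝 0) := by
  have hclosed : IsClosed
      {φ : Lp ℂ 1 ν | Tendsto (fun n => ∫ x, fourier n x * φ x ∂ν) (cocompact ℤ) (𝓝 0)} :=
    (Metric.equicontinuous_of_continuity_modulus id tendsto_id _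
      fun φ ψ n => dist_integral_fourier_mul_le n φ ψ).isClosed_setOfPred_tendsto continuous_const
  have hclosure :=
    hclosed.closure_subset_iff.mpr fun _ => h.tendsto_integral_fourier_mul_of_mem_span
  rw [← topologicalClosure_coe, span_toLp_fourier_closure_eq_top] at hclosure
  exact hclosure trivial

theorem IsRajchman.tendsto_integral_fourier_mul (h : ν.IsRajchman) {φ : AddCircle T → ℂ}
    (hφ : Integrable φ ν) :
    Tendsto (fun n => ∫ x, fourier n x * φ x ∂ν) (cocompact ℤ) (𝓝 0) :=
  (h.tendsto_integral_fourier_mul_L1 (hφ.toL1 φ)).congr fun n =>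
    integral_congr_ae (hφ.coeFn_toL1.mono fun x hx => by rw [hx])

theorem IsRajchman.tendsto_integral_fourier_comp_mul {Ω : Type*} [MeasurableSpace Ω]
    {P : Measure Ω} [IsFiniteMeasure P] {Y : Ω → AddCircle T} (h : (P.map Y).IsRajchman)
    (hY : Measurable Y) {g : Ω → ℂ} (hg : Integrable g P) :
    Tendsto (fun n => ∫ ω, fourier n (Y ω) * g ω ∂P) (cocompact ℤ) (𝓝 0) := by
  obtain ⟨φ, hφ, hgφ⟩ := (stronglyMeasurable_condExp (m := .comap Y inferInstance) (μ := P)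
    (f := g)).measurable.exists_eq_measurable_comp
  have hφi : Integrable φ (P.map Y) :=
    (integrable_map_measure hφ.aestronglyMeasurable hY.aemeasurable).mpr (hgφ ▸ integrable_condExp)
  refine (h.tendsto_integral_fourier_mul hφi).congr fun n => ?_
  have hfY : StronglyMeasurable[.comap Y inferInstance] fun ω => fourier n (Y ω) :=
    ((map_continuous (fourier n)).measurable.comp (comap_measurable Y)).stronglyMeasurable
  calc ∫ x, fourier n x * φ x ∂P.map Y
        = ∫ ω, fourier n (Y ω) * P[g|.comap Y inferInstance] ω ∂P := by
        rw [integral_map hY.aemeasurable (by fun_prop), hgφ]; rfl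
    _ = ∫ ω, P[fun ω => fourier n (Y ω) * g ω|.comap Y inferInstance] ω ∂P :=
        integral_congr_ae (condExp_bilin_of_stronglyMeasurable_left (ContinuousLinearMap.mul ℝ ℂ)
          hfY (integrable_fourier_comp_mul hY n hg) hg).symm
    _ = ∫ ω, fourier n (Y ω) * g ω ∂P := integral_condExp hY.comap_le

end MeasureTheory.Measure

theorem tendsto_floor_div_cocompact {c : ℝ} (hc : 0 < c) :
    Tendsto (fun u : ℝ => ⌊u / c⌋) (cocompact ℝ) (cocompact ℤ) := by
  rw [cocompact_eq_atBot_atTop, cocompact_eq_atBot_atTop]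
  exact (tendsto_floor_atBot.comp (tendsto_id.atBot_div_const hc)).sup_sup
    (tendsto_floor_atTop.comp (tendsto_id.atTop_div_const hc))

theorem tendsto_cocompact_of_tendstoUniformly_unitInterval {α : Type*} [UniformSpace α]
    {f : ℝ → α} {a : α} {c : ℝ} (hc : 0 < c)
    (h : TendstoUniformly (fun (n : ℤ) (t : unitInterval) => f (c * (n + t))) (fun _ => a)
      (cocompact ℤ)) :
    Tendsto f (cocompact ℝ) (𝓝 a) := by
  rw [tendstoUniformly_iff_tendsto] at h
  rw [Uniform.tendsto_nhds_right]
  have hcell : Tendsto (fun u : ℝ => (⌊u / c⌋, (⟨Int.fract (u / c), Int.fract_nonneg _,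
      (Int.fract_lt_one _).le⟩ : unitInterval))) (cocompact ℝ) (cocompact ℤ ×ˢ ⊤) :=
    (tendsto_floor_div_cocompact hc).prodMk tendsto_top
  refine (h.comp hcell).congr fun u => ?_
  simp [Int.floor_add_fract, mul_div_cancel₀ _ hc.ne']

section CharFun

theorem integrable_exp_mul_I (μ : Measure ℝ) [IsFiniteMeasure μ] (t : ℝ) :
    Integrable (fun x : ℝ => exp (t * x * I)) μ :=
  .of_bound (by fun_prop) 1 (ae_of_all _ fun x => by
    rw [← ofReal_mul, norm_exp_ofReal_mul_I])

theorem charFun_two_pi_mul_int_add (μ : Measure ℝ) (n : ℤ) (s : ℝ) :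
    charFun μ (2 * π * n + s) = ∫ x, fourier n (x : UnitAddCircle) * exp (s * x * I) ∂μ := by
  simp_rw [charFun_apply_real, fourier_coe_apply, ← exp_add]
  congr 1 with x
  congr 1
  push_cast
  ring

variable {μ : Measure ℝ} [IsFiniteMeasure μ]

theorem dist_charFun_le (u v : ℝ) :
    dist (charFun μ u) (charFun μ v) ≤ ∫ x, ‖exp (dist u v * x * I) - 1‖ ∂μ := by
  wlog huv : u ≤ v generalizing u v
  · rw [dist_comm, dist_comm u]
    exact this v u (le_of_not_ge huv)
  rw [dist_comm, dist_eq_norm, Real.dist_eq, abs_sub_comm, abs_of_nonneg (sub_nonneg.2 huv),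
    charFun_apply_real, charFun_apply_real,
    ← integral_sub (integrable_exp_mul_I μ v) (integrable_exp_mul_I μ u)]
  refine (norm_integral_le_integral_norm _).trans_eq (integral_congr_ae (ae_of_all _ fun x => ?_))
  have hsplit : exp (v * x * I) - exp (u * x * I)
      = exp (u * x * I) * (exp ((v - u : ℝ) * x * I) - 1) := by
    rw [mul_sub, ← exp_add]
    push_cast
    ring_nf
  simp only [hsplit]
  rw [norm_mul, ← ofReal_mul u x, norm_exp_ofReal_mul_I, one_mul]

theorem tendsto_integral_norm_exp_mul_I_sub_one :
    Tendsto (fun r : ℝ => ∫ x, ‖exp (r * x * I) - 1‖ ∂μ) (𝓝 0) (𝓝 0) := by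
  have hcont : Continuous fun r : ℝ => ∫ x, ‖exp (r * x * I) - 1‖ ∂μ :=
    continuous_of_dominated (bound := fun _ => 2) (fun r => by fun_prop)
      (fun r => ae_of_all _ fun x => by
        rw [norm_norm, ← ofReal_mul]
        refine (norm_sub_le _ _).trans ?_
        rw [norm_exp_ofReal_mul_I, norm_one]
        norm_num)
      (integrable_const 2) (ae_of_all _ fun x => by fun_prop)
  simpa using hcont.tendsto 0

theorem equicontinuous_charFun_two_pi_mul_int_add :
    Equicontinuous fun (n : ℤ) (t : unitInterval) => charFun μ (2 * π * (n + t)) := by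
  refine Metric.equicontinuous_of_continuity_modulus
    (fun r => ∫ x, ‖exp ((2 * π * r : ℝ) * x * I) - 1‖ ∂μ) ?_ _ fun t t' n => ?_
  · have h2π : Tendsto (fun r : ℝ => 2 * π * r) (𝓝 0) (𝓝 0) := by
      simpa using (continuous_const_mul (2 * π)).tendsto 0
    exact tendsto_integral_norm_exp_mul_I_sub_one.comp h2π
  · have hdist : dist (2 * π * (n + t)) (2 * π * (n + t')) = 2 * π * dist t t' := by
      rw [Subtype.dist_eq, Real.dist_eq, Real.dist_eq, ← mul_sub, add_sub_add_left_eq_sub,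
        abs_mul, abs_of_pos Real.two_pi_pos]
    simpa only [hdist] using dist_charFun_le (μ := μ) (2 * π * (n + t)) (2 * π * (n + t'))

theorem tendsto_charFun_two_pi_mul_int_add
    (hμ : (μ.map ((↑) : ℝ → UnitAddCircle)).IsRajchman) (s : ℝ) :
    Tendsto (fun n : ℤ => charFun μ (2 * π * n + s)) (cocompact ℤ) (𝓝 0) := by
  simp_rw [charFun_two_pi_mul_int_add]
  exact hμ.tendsto_integral_fourier_comp_mul AddCircle.measurable_mk' (integrable_exp_mul_I μ s)

theorem tendsto_charFun_cocompact_iff_isRajchman :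
    Tendsto (charFun μ) (cocompact ℝ) (𝓝 0) ↔ (μ.map ((↑) : ℝ → UnitAddCircle)).IsRajchman := by
  constructor
  · intro h
    have h2π : Tendsto (fun n : ℤ => 2 * π * n) (cocompact ℤ) (cocompact ℝ) :=
      (Homeomorph.mulLeft₀ (2 * π) Real.two_pi_pos.ne').isClosedEmbedding.tendsto_cocompact.comp
        Int.isClosedEmbedding_coe_real.tendsto_cocompact
    refine (h.comp h2π).congr fun n => ?_
    rw [Function.comp_apply, integral_map AddCircle.measurable_mk'.aemeasurable
      (map_continuous (fourier n)).aestronglyMeasurable, ← add_zero (2 * π * n),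
      charFun_two_pi_mul_int_add]
    simp only [ofReal_zero, zero_mul, exp_zero, mul_one]
  · intro hμ
    have hpointwise : Tendsto (fun (n : ℤ) (t : unitInterval) => charFun μ (2 * π * (n + t)))
        (cocompact ℤ) (𝓝 0) := tendsto_pi_nhds.2 fun t => by
      simpa [mul_add] using tendsto_charFun_two_pi_mul_int_add hμ (2 * π * t)
    exact tendsto_cocompact_of_tendstoUniformly_unitInterval Real.two_pi_pos
      (UniformFun.tendsto_iff_tendstoUniformly.1
        ((equicontinuous_charFun_two_pi_mul_int_add.tendsto_uniformFun_iff_pi _ 0).2 hpointwise))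

end CharFun

/-- For a real random variable `X`, the characteristic function
`Ψ_X(u) = E[e^{iuX}]` tends to `0` as `|u| → ∞` if and only if the Fourier
coefficients `∫ e^{2πin{X}} dP` of the law of the fractional part `{X}`
tend to `0` as `|n| → ∞`. -/
theorem stmt0 {Ω : Type*} [MeasurableSpace Ω] (P : Measure Ω) [IsProbabilityMeasure P]
    (X : Ω → ℝ) (hX : Measurable X) :
    Tendsto (fun u : ℝ => ∫ ω, Complex.exp (Complex.I * (u * X ω)) ∂P)
        (cocompact ℝ) (nhds 0) ↔
      Tendsto (fun n : ℤ => ∫ ω,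
          Complex.exp (2 * Real.pi * Complex.I * (n * Int.fract (X ω))) ∂P)
        (cocompact ℤ) (nhds 0) := by
  have hΨ : (fun u : ℝ => ∫ ω, exp (I * (u * X ω)) ∂P) = charFun (P.map X) := by
    ext u
    rw [charFun_apply_real, integral_map hX.aemeasurable (by fun_prop)]
    congr with ω
    ring_nf
  have hcoeff : ∀ n : ℤ, ∫ ω, exp (2 * π * I * (n * Int.fract (X ω))) ∂P
      = ∫ z, fourier n z ∂(P.map X).map ((↑) : ℝ → UnitAddCircle) := by
    intro n
    rw [Measure.map_map AddCircle.measurable_mk' hX,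
      integral_map (AddCircle.measurable_mk'.comp hX).aemeasurable (by fun_prop)]
    congr with ω
    rw [Function.comp_apply, ← AddCircle.coe_fract, fourier_coe_apply]
    push_cast
    ring_nf
  rw [hΨ, tendsto_charFun_cocompact_iff_isRajchman]
  simp only [Measure.IsRajchman, hcoeff]
end

section
/- Let ρ be a probability measure on [0,1) whose Fourier coefficients ρ̂(n) = ∫ e^{2πinx} dρ(x) tend to 0 as |n| → ∞ (ρ is Rajchman). Then for real (not just integer) frequencies, ∫ e^{2πiux} dρ(x) → 0 as |u| → ∞, u ∈ ℝ. -/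
open MeasureTheory Filter

/-!
Push `ρ` forward to the circle `ℝ/ℤ`. There the decay of the Fourier coefficients passes from
the characters to trigonometric polynomials, and by density to every `g ∈ L¹`:
`∫ g e_n → 0`. Taking `g(x) = e^{2πitx}` on `[0,1)` gives `ρ̂(n + t) → 0` for each fixed `t`.
As `ρ` lives on `[0,1)`, `ρ̂` is Lipschitz, so this convergence is uniform in `t ∈ [0,1]`
(Ascoli), and `u = ⌊u⌋ + fract u` concludes.
-/

open Set Submodule Topology Real

namespace AddCircle

variable {T : ℝ} {μ : Measure (AddCircle T)}

theorem norm_integral_mul_fourier_sub_le {f g : AddCircle T → ℂ} (hf : Integrable f μ)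
    (hg : Integrable g μ) (n : ℤ) :
    ‖∫ y, f y * fourier n y ∂μ - ∫ y, g y * fourier n y ∂μ‖ ≤ ∫ y, ‖f y - g y‖ ∂μ := by
  have hint {h : AddCircle T → ℂ} (hh : Integrable h μ) :
      Integrable (fun y => h y * fourier n y) μ :=
    hh.mul_bdd (fourier n).continuous.aestronglyMeasurable (c := 1)
      (ae_of_all _ fun y => by simp [fourier_apply, Circle.norm_coe])
  rw [← integral_sub (hint hf) (hint hg)]
  refine norm_integral_le_of_norm_le (hf.sub hg).norm (ae_of_all _ fun y => ?_)
  simp [← sub_mul, fourier_apply, Circle.norm_coe]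

variable [Fact (0 < T)] [IsFiniteMeasure μ]

theorem tendsto_integral_mul_fourier_of_mem_span
    (hμ : Tendsto (fun n : ℤ => ∫ y, fourier n y ∂μ) (cocompact ℤ) (𝓝 0))
    {P : C(AddCircle T, ℂ)} (hP : P ∈ span ℂ (range (@fourier T))) :
    Tendsto (fun n : ℤ => ∫ y, P y * fourier n y ∂μ) (cocompact ℤ) (𝓝 0) := by
  have hint (Q : C(AddCircle T, ℂ)) (n : ℤ) : Integrable (fun y => Q y * fourier n y) μ :=
    (Q.continuous.mul (fourier n).continuous).integrable_of_hasCompactSupport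
      (.of_compactSpace _)
  induction hP using span_induction with
  | mem Q hQ =>
    obtain ⟨k, rfl⟩ := hQ
    have hshift : Tendsto (k + ·) (cocompact ℤ) (cocompact ℤ) := by
      simpa only [cocompact_eq_cofinite] using (add_right_injective k).tendsto_cofinite
    simpa only [Function.comp_def, ← fourier_add] using hμ.comp hshift
  | zero => simp
  | add P Q _ _ hP hQ =>
    simpa only [ContinuousMap.add_apply, add_mul, integral_add (hint P _) (hint Q _), add_zero]
      using hP.add hQ
  | smul c P _ hP =>
    simpa only [ContinuousMap.smul_apply, smul_eq_mul, mul_assoc, integral_const_mul, mul_zero]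
      using hP.const_mul c

theorem exists_mem_span_fourier_integral_norm_sub_le {g : AddCircle T → ℂ}
    (hg : Integrable g μ) {ε : ℝ} (hε : 0 < ε) :
    ∃ P ∈ span ℂ (range (@fourier T)), ∫ y, ‖g y - P y‖ ∂μ ≤ ε := by
  obtain ⟨G, hgG, hG⟩ := hg.exists_boundedContinuous_integral_sub_le (half_pos hε)
  have hdense : G.toContinuousMap ∈
      closure (span ℂ (range (@fourier T)) : Set C(AddCircle T, ℂ)) := by
    rw [← topologicalClosure_coe, span_fourier_closure_eq_top]
    trivial
  set δ := ε / 2 / (μ.real univ + 1)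
  obtain ⟨P, hP, hGP⟩ := Metric.mem_closure_iff.mp hdense δ (by positivity)
  have hPint : Integrable P μ := P.continuous.integrable_of_hasCompactSupport (.of_compactSpace _)
  refine ⟨P, hP, ?_⟩
  calc ∫ y, ‖g y - P y‖ ∂μ ≤ ∫ y, (‖g y - G y‖ + δ) ∂μ := by
        refine integral_mono (hg.sub hPint).norm ((hg.sub hG).norm.add (integrable_const δ))
          fun y => (norm_sub_le_norm_sub_add_norm_sub _ (G y) _).trans ?_
        gcongr
        rw [← dist_eq_norm]
        exact (G.toContinuousMap.dist_apply_le_dist y).trans hGP.le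
    _ = ∫ y, ‖g y - G y‖ ∂μ + μ.real univ * δ := by
        rw [integral_add (f := fun y => ‖g y - G y‖) (hg.sub hG).norm (integrable_const δ),
          integral_const, smul_eq_mul]
    _ ≤ ε / 2 + ε / 2 := by
        gcongr
        rw [mul_div, div_le_iff₀ (by positivity)]
        nlinarith
    _ = ε := add_halves ε

theorem tendsto_integral_mul_fourier_of_integrable
    (hμ : Tendsto (fun n : ℤ => ∫ y, fourier n y ∂μ) (cocompact ℤ) (𝓝 0))
    {g : AddCircle T → ℂ} (hg : Integrable g μ) :
    Tendsto (fun n : ℤ => ∫ y, g y * fourier n y ∂μ) (cocompact ℤ) (𝓝 0) := by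
  rw [Metric.tendsto_nhds]
  intro ε hε
  obtain ⟨P, hP, hgP⟩ := exists_mem_span_fourier_integral_norm_sub_le hg (half_pos hε)
  have hPint : Integrable P μ := P.continuous.integrable_of_hasCompactSupport (.of_compactSpace _)
  filter_upwards [Metric.tendsto_nhds.mp (tendsto_integral_mul_fourier_of_mem_span hμ hP) _
    (half_pos hε)] with n hn
  rw [dist_zero_right] at hn ⊢
  calc _ ≤ ‖∫ y, g y * fourier n y ∂μ - ∫ y, P y * fourier n y ∂μ‖
          + ‖∫ y, P y * fourier n y ∂μ‖ := norm_le_norm_sub_add _ _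
    _ < ε / 2 + ε / 2 :=
        add_lt_add_of_le_of_lt ((norm_integral_mul_fourier_sub_le hg hPint n).trans hgP) hn
    _ = ε := add_halves ε

theorem measurableEmbedding_equivIco (a : ℝ) :
    MeasurableEmbedding (fun y : AddCircle T => (equivIco T a y : ℝ)) :=
  (MeasurableEmbedding.subtype_coe measurableSet_Ico).comp
    (measurableEquivIco T a).measurableEmbedding

theorem map_equivIco_map_coe {ρ : Measure ℝ} (hρ : ρ (Ico 0 1)ᶜ = 0) :
    (ρ.map ((↑) : ℝ → AddCircle (1 : ℝ))).map (fun y => (equivIco 1 0 y : ℝ)) = ρ := by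
  rw [Measure.map_map (measurableEmbedding_equivIco 0).measurable
    AddCircle.measurable_mk']
  conv_rhs => rw [← Measure.map_id (μ := ρ)]
  refine Measure.map_congr ?_
  filter_upwards [measure_eq_zero_iff_ae_notMem.mp hρ] with x hx
  simpa using equivIco_coe_of_mem (p := (1 : ℝ)) (a := 0) (by simpa using hx)

end AddCircle

theorem fourier_coe_eq_exp (n : ℤ) (x : ℝ) :
    fourier n (x : AddCircle (1 : ℝ)) = Complex.exp (2 * π * Complex.I * (n * x)) := by
  rw [fourier_coe_apply]; push_cast; ring_nf

theorem two_pi_I_mul_ofReal (r : ℝ) : 2 * π * Complex.I * r = Complex.I * ↑(2 * π * r) := by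
  push_cast; ring

theorem norm_exp_two_pi_I_mul (a : ℝ) : ‖Complex.exp (2 * π * Complex.I * a)‖ = 1 := by
  rw [two_pi_I_mul_ofReal, Complex.norm_exp_I_mul_ofReal]

theorem norm_exp_two_pi_I_mul_sub_exp_le (a b : ℝ) :
    ‖Complex.exp (2 * π * Complex.I * a) - Complex.exp (2 * π * Complex.I * b)‖
      ≤ 2 * π * |a - b| := by
  have hsplit : Complex.exp (2 * π * Complex.I * a) - Complex.exp (2 * π * Complex.I * b)
      = Complex.exp (2 * π * Complex.I * b)
        * (Complex.exp (2 * π * Complex.I * ↑(a - b)) - 1) := by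
    rw [mul_sub, ← Complex.exp_add, mul_one]; push_cast; ring_nf
  rw [hsplit, norm_mul, norm_exp_two_pi_I_mul, one_mul, two_pi_I_mul_ofReal]
  refine norm_exp_I_mul_ofReal_sub_one_le.trans_eq ?_
  rw [Real.norm_eq_abs, abs_mul, abs_of_pos two_pi_pos]

theorem integrable_exp_two_pi_I_mul (ρ : Measure ℝ) [IsFiniteMeasure ρ] (u : ℝ) :
    Integrable (fun x : ℝ => Complex.exp (2 * π * Complex.I * (u * x))) ρ :=
  (integrable_const 1).mono' (by fun_prop : Continuous _).aestronglyMeasurable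
    (ae_of_all _ fun x => by exact_mod_cast (norm_exp_two_pi_I_mul (u * x)).le)

noncomputable def fourierStieltjes (ρ : Measure ℝ) (u : ℝ) : ℂ :=
  ∫ x, Complex.exp (2 * π * Complex.I * (u * x)) ∂ρ

theorem lipschitzWith_fourierStieltjes {ρ : Measure ℝ} [IsFiniteMeasure ρ] {R : ℝ}
    (hR : ∀ᵐ x ∂ρ, |x| ≤ R) :
    LipschitzWith (ρ.real univ * (2 * π * R)).toNNReal (fourierStieltjes ρ) := by
  refine LipschitzWith.of_dist_le' fun u v => ?_
  rw [dist_eq_norm, Real.dist_eq, fourierStieltjes, fourierStieltjes,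
    ← integral_sub (integrable_exp_two_pi_I_mul ρ u) (integrable_exp_two_pi_I_mul ρ v)]
  refine (norm_integral_le_of_norm_le (integrable_const (2 * π * R * |u - v|)) ?_).trans_eq
    (by rw [integral_const, smul_eq_mul]; ring)
  filter_upwards [hR] with x hx
  calc _ ≤ 2 * π * |u * x - v * x| := by
        exact_mod_cast norm_exp_two_pi_I_mul_sub_exp_le (u * x) (v * x)
    _ = 2 * π * (|x| * |u - v|) := by rw [← sub_mul, abs_mul, mul_comm |u - v|]
    _ ≤ 2 * π * (R * |u - v|) := by gcongr
    _ = _ := by ring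

theorem tendsto_integral_mul_exp_of_integrable {ρ : Measure ℝ} [IsFiniteMeasure ρ]
    (hρ : ρ (Ico 0 1)ᶜ = 0)
    (hRaj : Tendsto (fun n : ℤ => fourierStieltjes ρ n) (cocompact ℤ) (𝓝 0))
    {h : ℝ → ℂ} (hh : Integrable h ρ) :
    Tendsto (fun n : ℤ => ∫ x, h x * Complex.exp (2 * π * Complex.I * (n * x)) ∂ρ)
      (cocompact ℤ) (𝓝 0) := by
  set μ := ρ.map ((↑) : ℝ → AddCircle (1 : ℝ))
  set ι := fun y : AddCircle (1 : ℝ) => (AddCircle.equivIco 1 0 y : ℝ)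
  have hι : MeasurableEmbedding ι := AddCircle.measurableEmbedding_equivIco 0
  have hμι : μ.map ι = ρ := AddCircle.map_equivIco_map_coe hρ
  have hμ : Tendsto (fun n : ℤ => ∫ y, fourier n y ∂μ) (cocompact ℤ) (𝓝 0) := by
    refine hRaj.congr fun n => ?_
    rw [integral_map AddCircle.measurable_mk'.aemeasurable
      (fourier n).continuous.aestronglyMeasurable]
    simp only [fourier_coe_eq_exp, fourierStieltjes, Complex.ofReal_intCast]
  have hhι : Integrable (h ∘ ι) μ := by rwa [← hι.integrable_map_iff, hμι]
  refine (AddCircle.tendsto_integral_mul_fourier_of_integrable hμ hhι).congr fun n => ?_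
  conv_rhs => rw [← hμι, hι.integral_map]
  simp only [Function.comp_apply, ι, ← fourier_coe_eq_exp, AddCircle.coe_equivIco]

theorem EquicontinuousOn.tendstoUniformlyOn_of_tendsto {ι X α : Type*} [TopologicalSpace X]
    [UniformSpace α] {F : ι → X → α} {f : X → α} {s : Set X} (hF : EquicontinuousOn F s)
    (hs : IsCompact s) {l : Filter ι} (h : ∀ x ∈ s, Tendsto (F · x) l (𝓝 (f x))) :
    TendstoUniformlyOn F f l s := by
  have := (EquicontinuousOn.tendsto_uniformOnFun_iff_pi' (𝔖 := {s}) (by simpa using hs)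
    (by simpa using hF) l f).mpr (tendsto_pi_nhds.mpr fun x => by
      simpa using h x (by simpa using x.2))
  exact UniformOnFun.tendsto_iff_tendstoUniformlyOn.mp this s rfl

theorem UniformContinuous.tendsto_cocompact_of_tendsto_int_add {α : Type*}
    [PseudoMetricSpace α] {f : ℝ → α} {a : α} (hf : UniformContinuous f)
    (h : ∀ t ∈ Icc (0 : ℝ) 1, Tendsto (fun n : ℤ => f (n + t)) (cocompact ℤ) (𝓝 a)) :
    Tendsto f (cocompact ℝ) (𝓝 a) := by
  have hequi : UniformEquicontinuous fun (n : ℤ) t => f (n + t) := by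
    rw [Metric.uniformEquicontinuous_iff]
    intro ε hε
    obtain ⟨δ, hδ, hfδ⟩ := Metric.uniformContinuous_iff.mp hf ε hε
    exact ⟨δ, hδ, fun s t hst n => hfδ (by simpa using hst)⟩
  have hunif := hequi.equicontinuous.equicontinuousOn _ |>.tendstoUniformlyOn_of_tendsto
    isCompact_Icc (f := fun _ => a) h
  have hfloor : Tendsto Int.floor (cocompact ℝ) (cocompact ℤ) := by
    simpa only [cocompact_eq_atBot_atTop] using tendsto_floor_atBot.sup_sup tendsto_floor_atTop
  rw [Metric.tendsto_nhds]
  intro ε hε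
  filter_upwards [hfloor.eventually (Metric.tendstoUniformlyOn_iff.mp hunif ε hε)] with u hu
  simpa [dist_comm, Int.floor_add_fract] using
    hu (Int.fract u) ⟨Int.fract_nonneg u, (Int.fract_lt_one u).le⟩

/-- If `ρ` is a probability measure on `[0,1)` whose Fourier
coefficients at integer frequencies tend to `0` (Rajchman), then its Fourier
transform at real frequencies `u` also tends to `0` as `|u| → ∞`. -/
theorem stmt1 (ρ : Measure ℝ) [IsProbabilityMeasure ρ]
    (hsupp : ρ (Set.Ico (0:ℝ) 1)ᶜ = 0)
    (hRaj : Tendsto (fun n : ℤ => ∫ x, Complex.exp (2 * Real.pi * Complex.I * (n * x)) ∂ρ)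
      (cocompact ℤ) (nhds 0)) :
    Tendsto (fun u : ℝ => ∫ x, Complex.exp (2 * Real.pi * Complex.I * (u * x)) ∂ρ)
      (cocompact ℝ) (nhds 0) := by
  change Tendsto (fourierStieltjes ρ) _ _
  have hbdd : ∀ᵐ x ∂ρ, |x| ≤ 1 := by
    filter_upwards [measure_eq_zero_iff_ae_notMem.mp hsupp] with x hx
    rw [mem_compl_iff, not_not, mem_Ico] at hx
    exact abs_le.mpr ⟨by linarith, hx.2.le⟩
  refine (lipschitzWith_fourierStieltjes hbdd).uniformContinuous
    |>.tendsto_cocompact_of_tendsto_int_add fun t _ => ?_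
  refine (tendsto_integral_mul_exp_of_integrable hsupp hRaj
    (integrable_exp_two_pi_I_mul ρ t)).congr fun n => integral_congr_ae (ae_of_all _ fun x => ?_)
  rw [← Complex.exp_add]; push_cast; ring_nf
end

section
/- The set of Rajchman measures on the torus is a band: if μ is a Rajchman measure and ν is a measure absolutely continuous with respect to |μ|, then ν is Rajchman. -/
open MeasureTheory Filter

/-- The `n`-th Fourier coefficient of a signed measure on the torus. -/
noncomputable def signedFourierCoeff (μ : MeasureTheory.SignedMeasure (AddCircle (1:ℝ)))
    (n : ℤ) : ℂ :=
  (∫ x, fourier n x ∂μ.toJordanDecomposition.posPart) -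
    ∫ x, fourier n x ∂μ.toJordanDecomposition.negPart

/-- A signed measure on the torus is Rajchman if its Fourier coefficients tend to `0`. -/
def IsRajchman (μ : MeasureTheory.SignedMeasure (AddCircle (1:ℝ))) : Prop :=
  Tendsto (fun n : ℤ => signedFourierCoeff μ n) (cocompact ℤ) (nhds 0)

/-!
Write `σ = |μ|`, `dμ = s dσ` with `s = ±1` (Hahn decomposition) and `dν = k dσ` with
`k ∈ L¹(σ)` (Radon–Nikodym). Call `f` a Rajchman density if `∫ eₙ f dσ → 0`. Since
`eₘ eₙ = eₘ₊ₙ`, multiplying a Rajchman density by a trigonometric polynomial keeps it one;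
since `|∫ eₙ f dσ| ≤ ‖f‖₁`, Rajchman densities are closed in `L¹(σ)`; and trigonometric
polynomials are dense in `L¹(σ)`. Hence `g s` is a Rajchman density for every `g ∈ L¹(σ)`,
and `g = k s` gives `k s² = k`, the density of `ν`.
-/

open Topology

lemma MeasureTheory.Integrable.continuousMap_mul {X : Type*} [TopologicalSpace X]
    [CompactSpace X] [MeasurableSpace X] [OpensMeasurableSpace X] {σ : Measure X} {f : X → ℂ}
    (hf : Integrable f σ) (p : C(X, ℂ)) : Integrable (fun x => p x * f x) σ :=
  hf.bdd_mul p.continuous.aestronglyMeasurable (ae_of_all _ p.norm_coe_le_norm)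

namespace MeasureTheory

variable {α E : Type*} [MeasurableSpace α] [NormedAddCommGroup E] [NormedSpace ℝ E]

lemma Measure.MutuallySingular.add_restrict_nullSet {μ ν : Measure α} (h : μ ⟂ₘ ν) :
    (μ + ν).restrict h.nullSet = ν := by
  rw [Measure.restrict_add, h.restrict_nullSet, zero_add,
    Measure.restrict_eq_self_of_ae_mem
      (compl_compl h.nullSet ▸ compl_mem_ae_iff.2 h.measure_compl_nullSet)]

lemma Measure.MutuallySingular.add_restrict_compl_nullSet {μ ν : Measure α} (h : μ ⟂ₘ ν) :
    (μ + ν).restrict h.nullSetᶜ = μ := by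
  rw [Measure.restrict_add, h.restrict_compl_nullSet, add_zero,
    Measure.restrict_eq_self_of_ae_mem (s := h.nullSetᶜ) (compl_mem_ae_iff.2 h.measure_nullSet)]

namespace SignedMeasure

lemma exists_sign_integral_eq (μ : SignedMeasure α) :
    ∃ s : α → ℝ, Measurable s ∧ (∀ x, s x = 1 ∨ s x = -1) ∧
      ∀ f : α → E, Integrable f μ.totalVariation →
        ∫ x, f x ∂μ.toJordanDecomposition.posPart - ∫ x, f x ∂μ.toJordanDecomposition.negPart =
          ∫ x, s x • f x ∂μ.totalVariation := by
  classical
  set h := μ.toJordanDecomposition.mutuallySingular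
  have hN := h.measurableSet_nullSet
  refine ⟨h.nullSet.piecewise (fun _ => -1) (fun _ => 1),
    Measurable.piecewise hN measurable_const measurable_const,
    fun x => by by_cases hx : x ∈ h.nullSet <;> simp [hx], fun f hf => ?_⟩
  have hsf : (fun x => h.nullSet.piecewise (fun _ => (-1 : ℝ)) (fun _ => 1) x • f x) =
      h.nullSet.piecewise (fun x => -f x) f := by
    ext x
    by_cases hx : x ∈ h.nullSet <;> simp [hx]
  rw [hsf, integral_piecewise (f := fun x => -f x) hN hf.neg.integrableOn hf.integrableOn,
    integral_neg, totalVariation, h.add_restrict_nullSet, h.add_restrict_compl_nullSet,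
    neg_add_eq_sub]

lemma integral_posPart_sub_integral_negPart_eq_integral_rnDeriv_smul {ν : SignedMeasure α}
    {σ : Measure α} [SigmaFinite σ] (hν : ν.totalVariation ≪ σ) {f : α → E}
    (hf : Integrable f ν.totalVariation) :
    ∫ x, f x ∂ν.toJordanDecomposition.posPart - ∫ x, f x ∂ν.toJordanDecomposition.negPart =
      ∫ x, ν.rnDeriv σ x • f x ∂σ := by
  obtain ⟨hP, hQ⟩ := (totalVariation_absolutelyContinuous_iff ν σ).1 hν
  have hfP : Integrable f ν.toJordanDecomposition.posPart :=
    hf.mono_measure (Measure.le_add_right le_rfl)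
  have hfQ : Integrable f ν.toJordanDecomposition.negPart :=
    hf.mono_measure (Measure.le_add_left le_rfl)
  rw [← integral_rnDeriv_smul hP, ← integral_rnDeriv_smul hQ,
    ← integral_sub ((integrable_rnDeriv_smul_iff hP).2 hfP)
      ((integrable_rnDeriv_smul_iff hQ).2 hfQ)]
  simp only [rnDeriv_def, sub_smul]

end SignedMeasure

end MeasureTheory

section Rajchman

variable {T : ℝ} {σ : Measure (AddCircle T)} {f g : AddCircle T → ℂ}

def IsRajchmanDensity (σ : Measure (AddCircle T)) (f : AddCircle T → ℂ) : Prop :=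
  Tendsto (fun n : ℤ => ∫ x, fourier n x * f x ∂σ) (cocompact ℤ) (𝓝 0)

lemma norm_integral_fourier_mul_le (n : ℤ) (f : AddCircle T → ℂ) :
    ‖∫ x, fourier n x * f x ∂σ‖ ≤ ∫ x, ‖f x‖ ∂σ := by
  refine (norm_integral_le_integral_norm _).trans_eq ?_
  simp only [norm_mul, Circle.norm_coe, fourier_apply, one_mul]

namespace IsRajchmanDensity

lemma fourier_mul (hf : IsRajchmanDensity σ f) (m : ℤ) :
    IsRajchmanDensity σ (fun x => fourier m x * f x) := by
  have hshift : Tendsto (· + m) (cocompact ℤ) (cocompact ℤ) :=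
    (Homeomorph.addRight m).map_cocompact.le
  refine (hf.comp hshift).congr fun n => ?_
  simp only [Function.comp_apply, fourier_add, mul_assoc]

lemma add [Fact (0 < T)] (hf : IsRajchmanDensity σ f) (hg : IsRajchmanDensity σ g)
    (hf_int : Integrable f σ) (hg_int : Integrable g σ) :
    IsRajchmanDensity σ (fun x => f x + g x) := by
  have hsum := Tendsto.add hf hg
  rw [add_zero] at hsum
  refine hsum.congr fun n => ?_
  rw [← integral_add (hf_int.continuousMap_mul _) (hg_int.continuousMap_mul _)]
  simp only [mul_add]

lemma const_mul (hf : IsRajchmanDensity σ f) (c : ℂ) :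
    IsRajchmanDensity σ (fun x => c * f x) := by
  have hmul := Tendsto.const_mul c hf
  rw [mul_zero] at hmul
  refine hmul.congr fun n => ?_
  rw [← integral_const_mul]
  simp only [mul_left_comm]

lemma continuousMap_mul_of_mem_span [Fact (0 < T)] (hf : IsRajchmanDensity σ f)
    (hf_int : Integrable f σ) {p : C(AddCircle T, ℂ)}
    (hp : p ∈ Submodule.span ℂ (Set.range (fourier (T := T)))) :
    IsRajchmanDensity σ (fun x => p x * f x) := by
  induction hp using Submodule.span_induction with
  | mem p hp =>
    obtain ⟨m, rfl⟩ := hp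
    exact hf.fourier_mul m
  | zero => simp [IsRajchmanDensity]
  | add p q _ _ hp hq =>
    simpa only [ContinuousMap.add_apply, add_mul] using
      hp.add hq (hf_int.continuousMap_mul p) (hf_int.continuousMap_mul q)
  | smul c p _ hp =>
    simpa only [ContinuousMap.smul_apply, smul_eq_mul, mul_assoc] using hp.const_mul c

lemma of_forall_integral_norm_sub_lt [Fact (0 < T)] (hf : Integrable f σ)
    (h : ∀ ε > 0, ∃ g, Integrable g σ ∧ IsRajchmanDensity σ g ∧ ∫ x, ‖f x - g x‖ ∂σ < ε) :
    IsRajchmanDensity σ f := by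
  refine Metric.tendsto_nhds.2 fun ε hε => ?_
  obtain ⟨g, hg_int, hg, hfg⟩ := h (ε / 2) (half_pos hε)
  filter_upwards [Metric.tendsto_nhds.1 hg (ε / 2) (half_pos hε)] with n hn
  rw [dist_zero_right] at hn ⊢
  have hsplit : ∫ x, fourier n x * f x ∂σ
      = ∫ x, fourier n x * (f x - g x) ∂σ + ∫ x, fourier n x * g x ∂σ := by
    have hfg_int : Integrable (fun x => f x - g x) σ := hf.sub hg_int
    rw [← integral_add (hfg_int.continuousMap_mul _) (hg_int.continuousMap_mul _)]
    simp only [mul_sub, sub_add_cancel]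
  calc ‖∫ x, fourier n x * f x ∂σ‖
      ≤ ‖∫ x, fourier n x * (f x - g x) ∂σ‖ + ‖∫ x, fourier n x * g x ∂σ‖ :=
        hsplit ▸ norm_add_le _ _
    _ < ε / 2 + ε / 2 :=
        add_lt_add_of_le_of_lt ((norm_integral_fourier_mul_le n _).trans hfg.le) hn
    _ = ε := add_halves ε

end IsRajchmanDensity

lemma exists_mem_span_fourier_integral_norm_sub_lt [Fact (0 < T)] [IsFiniteMeasure σ]
    (hg : Integrable g σ) {ε : ℝ} (hε : 0 < ε) :
    ∃ p ∈ Submodule.span ℂ (Set.range (fourier (T := T))), ∫ x, ‖g x - p x‖ ∂σ < ε := by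
  obtain ⟨h, hgh, h_int⟩ := hg.exists_boundedContinuous_integral_sub_le (half_pos hε)
  set δ := ε / 2 / (σ.real Set.univ + 1)
  have hδ : 0 < δ := by positivity
  have hh : h.toContinuousMap ∈ closure
      (Submodule.span ℂ (Set.range (fourier (T := T))) : Set C(AddCircle T, ℂ)) := by
    rw [← Submodule.topologicalClosure_coe, span_fourier_closure_eq_top]
    trivial
  obtain ⟨p, hp, hhp⟩ := Metric.mem_closure_iff.1 hh δ hδ
  have p_int : Integrable p σ := p.continuous.integrable_of_hasCompactSupport (.of_compactSpace _)
  have hhp_int : ∫ x, ‖h x - p x‖ ∂σ ≤ δ * σ.real Set.univ := by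
    refine le_of_eq_of_le (Real.norm_of_nonneg (integral_nonneg fun x => norm_nonneg _)).symm
      (norm_integral_le_of_norm_le_const (ae_of_all _ fun x => ?_))
    rw [norm_norm, ← dist_eq_norm]
    exact (ContinuousMap.dist_apply_le_dist (f := h.toContinuousMap) x).trans hhp.le
  refine ⟨p, hp, ?_⟩
  calc ∫ x, ‖g x - p x‖ ∂σ ≤ ∫ x, (‖g x - h x‖ + ‖h x - p x‖) ∂σ :=
        integral_mono (hg.sub p_int).norm ((hg.sub h_int).norm.add (h_int.sub p_int).norm)
          fun x => norm_sub_le_norm_sub_add_norm_sub _ _ _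
    _ = ∫ x, ‖g x - h x‖ ∂σ + ∫ x, ‖h x - p x‖ ∂σ :=
        integral_add (hg.sub h_int).norm (h_int.sub p_int).norm
    _ < ε / 2 + ε / 2 := by
        refine add_lt_add_of_le_of_lt hgh (hhp_int.trans_lt ?_)
        calc δ * σ.real Set.univ < δ * (σ.real Set.univ + 1) :=
              mul_lt_mul_of_pos_left (lt_add_one _) hδ
          _ = ε / 2 := div_mul_cancel₀ _ (by positivity)
    _ = ε := add_halves ε

lemma IsRajchmanDensity.mul_left_of_integrable [Fact (0 < T)] [IsFiniteMeasure σ]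
    {s : AddCircle T → ℂ} {C : ℝ} (hs : IsRajchmanDensity σ s) (hs_meas : AEStronglyMeasurable s σ)
    (hs_bdd : ∀ᵐ x ∂σ, ‖s x‖ ≤ C) (hg : Integrable g σ) :
    IsRajchmanDensity σ (fun x => g x * s x) := by
  have hs_int : Integrable s σ := (integrable_const C).mono' hs_meas hs_bdd
  have hgs_int : Integrable (fun x => g x * s x) σ := hg.mul_bdd hs_meas hs_bdd
  refine IsRajchmanDensity.of_forall_integral_norm_sub_lt hgs_int fun ε hε => ?_
  set η := ε / (|C| + 1)
  have hη : 0 < η := by positivity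
  obtain ⟨p, hp, hgp⟩ := exists_mem_span_fourier_integral_norm_sub_lt hg hη
  have hps_int := hs_int.continuousMap_mul p
  refine ⟨fun x => p x * s x, hps_int, hs.continuousMap_mul_of_mem_span hs_int hp, ?_⟩
  have p_int : Integrable p σ := p.continuous.integrable_of_hasCompactSupport (.of_compactSpace _)
  calc ∫ x, ‖g x * s x - p x * s x‖ ∂σ ≤ ∫ x, |C| * ‖g x - p x‖ ∂σ := by
        refine integral_mono_ae (hgs_int.sub hps_int).norm
          ((hg.sub p_int).norm.const_mul _) ?_
        filter_upwards [hs_bdd] with x hx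
        rw [← sub_mul, norm_mul, mul_comm]
        exact mul_le_mul_of_nonneg_right (hx.trans (le_abs_self C)) (norm_nonneg _)
    _ = |C| * ∫ x, ‖g x - p x‖ ∂σ := integral_const_mul _ _
    _ ≤ |C| * η := mul_le_mul_of_nonneg_left hgp.le (abs_nonneg C)
    _ < (|C| + 1) * η := mul_lt_mul_of_pos_right (lt_add_one _) hη
    _ = ε := mul_div_cancel₀ _ (by positivity)

end Rajchman

lemma signedFourierCoeff_eq_integral_rnDeriv {ν : SignedMeasure (AddCircle (1:ℝ))}
    {σ : Measure (AddCircle (1:ℝ))} [IsFiniteMeasure σ] (hν : ν.totalVariation ≪ σ) (n : ℤ) :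
    signedFourierCoeff ν n = ∫ x, fourier n x * (ν.rnDeriv σ x : ℂ) ∂σ := by
  rw [signedFourierCoeff,
    SignedMeasure.integral_posPart_sub_integral_negPart_eq_integral_rnDeriv_smul hν
      ((fourier n).continuous.integrable_of_hasCompactSupport (.of_compactSpace _))]
  simp only [Complex.real_smul, mul_comm]

lemma isRajchman_iff_isRajchmanDensity_rnDeriv {ν : SignedMeasure (AddCircle (1:ℝ))}
    {σ : Measure (AddCircle (1:ℝ))} [IsFiniteMeasure σ] (hν : ν.totalVariation ≪ σ) :
    IsRajchman ν ↔ IsRajchmanDensity σ (fun x => (ν.rnDeriv σ x : ℂ)) := by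
  simp only [IsRajchman, IsRajchmanDensity, signedFourierCoeff_eq_integral_rnDeriv hν]

lemma IsRajchman.exists_sign_isRajchmanDensity {μ : SignedMeasure (AddCircle (1:ℝ))}
    (hμ : IsRajchman μ) :
    ∃ s : AddCircle (1:ℝ) → ℝ, Measurable s ∧ (∀ x, s x = 1 ∨ s x = -1) ∧
      IsRajchmanDensity μ.totalVariation (fun x => (s x : ℂ)) := by
  obtain ⟨s, hs_meas, hs_sign, hs⟩ := μ.exists_sign_integral_eq (E := ℂ)
  refine ⟨s, hs_meas, hs_sign, hμ.congr fun n => ?_⟩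
  rw [signedFourierCoeff,
    hs _ ((fourier n).continuous.integrable_of_hasCompactSupport (.of_compactSpace _))]
  simp only [Complex.real_smul, mul_comm]

/-- The set of Rajchman measures on the torus is a band: if `μ` is
Rajchman and `ν` is absolutely continuous with respect to `|μ|`, then `ν` is Rajchman. -/
theorem stmt2 (μ ν : MeasureTheory.SignedMeasure (AddCircle (1:ℝ)))
    (hμ : IsRajchman μ)
    (hν : ν.totalVariation ≪ μ.totalVariation) :
    IsRajchman ν := by
  obtain ⟨s, hs_meas, hs_sign, hs⟩ := hμ.exists_sign_isRajchmanDensity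
  have hs_sq : ∀ x, (s x : ℂ) * s x = 1 := fun x => by rcases hs_sign x with h | h <;> simp [h]
  have hs_bdd : ∀ x, ‖(s x : ℂ)‖ ≤ 1 := fun x => by rcases hs_sign x with h | h <;> simp [h]
  set k := fun x => (ν.rnDeriv μ.totalVariation x : ℂ)
  have hk : Integrable k μ.totalVariation := (SignedMeasure.integrable_rnDeriv _ _).ofReal
  have hs_meas' := (Complex.measurable_ofReal.comp hs_meas).aestronglyMeasurable
    (μ := μ.totalVariation)
  have hks : IsRajchmanDensity μ.totalVariation (fun x => k x * s x * s x) :=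
    hs.mul_left_of_integrable hs_meas' (ae_of_all _ hs_bdd)
      (hk.mul_bdd hs_meas' (ae_of_all _ hs_bdd))
  simp only [mul_assoc, hs_sq, mul_one] at hks
  exact (isRajchman_iff_isRajchmanDensity_rnDeriv hν).2 hks
end

section
/- Let Y be a bounded real random variable and Y_n^{(d)} = ⌊nY⌋/n its approximation by default on the 1/n-graduation. If the law of Y is Rajchman, then n(Y_n^{(d)} - Y) converges in distribution to −U where U is uniform on [0,1], and E[n(Y_n^{(d)} - Y)] → −1/2. -/
/-!
Since `n (⌊n Y⌋ / n - Y) = -fract (n Y)`, everything is about `n Y` modulo `1`. The Fourier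
coefficients of its law are `E[exp (2πi k n Y)]`, which tend to `0` for `k ≠ 0` because the law of
`Y` is Rajchman; as trigonometric polynomials are dense in `C(ℝ ⧸ ℤ)`, the law of `n Y` modulo `1`
converges weakly to Haar measure (Weyl's criterion). A test function `F (-fract x)` is continuous
modulo `1` up to a multiple of the sawtooth `fract x`, and `E[fract (n Y)] → 1/2` because the
sawtooth is squeezed between continuous periodic functions with nearly the same integral.
-/

open MeasureTheory Filter Topology AddCircle

section Weyl

variable {X E : Type*} [TopologicalSpace X] [CompactSpace X] [MeasurableSpace X]
  [OpensMeasurableSpace X] [NormedAddCommGroup E]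

lemma ContinuousMap.integrable_of_compactSpace (μ : Measure X) [IsFiniteMeasure μ]
    (f : C(X, E)) : Integrable f μ :=
  f.continuous.integrable_of_hasCompactSupport (.of_compactSpace f)

lemma lipschitzWith_integral_continuousMap [NormedSpace ℝ E] (μ : Measure X)
    [IsProbabilityMeasure μ] : LipschitzWith 1 fun f : C(X, E) => ∫ x, f x ∂μ := by
  refine LipschitzWith.of_dist_le_mul fun f g => ?_
  rw [dist_eq_norm, dist_eq_norm, ← integral_sub (f.integrable_of_compactSpace μ)
    (g.integrable_of_compactSpace μ), NNReal.coe_one, one_mul]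
  simpa using norm_integral_le_of_norm_le_const (μ := μ)
    (ae_of_all _ fun x => (f - g).norm_coe_le_norm x)

variable {T : ℝ} [Fact (0 < T)]

lemma integral_fourier_haarAddCircle {k : ℤ} (hk : k ≠ 0) :
    ∫ x : AddCircle T, fourier k x ∂haarAddCircle = 0 := by
  simpa [fourierCoeff, fourier_zero, Ne.symm hk] using
    congr_fun (fourierCoeff_fourier (T := T) k) 0

/-- Weyl's criterion. The functions along which the integrals converge form a submodule, closed
because the integrals are uniformly `1`-Lipschitz, and it contains the dense span of the Fourier
monomials. -/
theorem tendsto_integral_haarAddCircle_of_tendsto_integral_fourier {ι : Type*} {l : Filter ι}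
    {μ : ι → Measure (AddCircle T)} [∀ i, IsProbabilityMeasure (μ i)]
    (hμ : ∀ k : ℤ, k ≠ 0 → Tendsto (fun i => ∫ x, fourier k x ∂μ i) l (𝓝 0))
    (f : C(AddCircle T, ℂ)) :
    Tendsto (fun i => ∫ x, f x ∂μ i) l (𝓝 (∫ x, f x ∂haarAddCircle)) := by
  let S : Submodule ℂ C(AddCircle T, ℂ) :=
    { carrier := {f | Tendsto (fun i => ∫ x, f x ∂μ i) l (𝓝 (∫ x, f x ∂haarAddCircle))}
      add_mem' := fun {f g} hf hg => by
        simpa only [Set.mem_ofPred_eq, ContinuousMap.add_apply,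
          integral_add (f.integrable_of_compactSpace _) (g.integrable_of_compactSpace _)]
          using hf.add hg
      zero_mem' := by simpa using tendsto_const_nhds
      smul_mem' := fun c f hf => by simpa [integral_const_mul] using hf.const_mul c }
  have hclosed : IsClosed (S : Set C(AddCircle T, ℂ)) :=
    (LipschitzWith.uniformEquicontinuous _ 1 fun i =>
      lipschitzWith_integral_continuousMap (μ i)).equicontinuous.isClosed_setOfPred_tendsto
      (lipschitzWith_integral_continuousMap haarAddCircle).continuous
  have hspan : Submodule.span ℂ (Set.range (fourier (T := T))) ≤ S := by
    refine Submodule.span_le.2 ?_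
    rintro _ ⟨k, rfl⟩
    show Tendsto _ _ _
    rcases eq_or_ne k 0 with rfl | hk
    · simpa [fourier_zero] using tendsto_const_nhds
    · simpa only [integral_fourier_haarAddCircle hk] using hμ k hk
  have hS : ⊤ ≤ S := span_fourier_closure_eq_top (T := T) ▸
    Submodule.topologicalClosure_minimal _ hspan hclosed
  exact hS trivial

theorem tendsto_integral_haarAddCircle_of_tendsto_integral_fourier_real {ι : Type*}
    {l : Filter ι} {μ : ι → Measure (AddCircle T)} [∀ i, IsProbabilityMeasure (μ i)]
    (hμ : ∀ k : ℤ, k ≠ 0 → Tendsto (fun i => ∫ x, fourier k x ∂μ i) l (𝓝 0))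
    (f : C(AddCircle T, ℝ)) :
    Tendsto (fun i => ∫ x, f x ∂μ i) l (𝓝 (∫ x, f x ∂haarAddCircle)) := by
  have := (Complex.continuous_re.tendsto _).comp
    (tendsto_integral_haarAddCircle_of_tendsto_integral_fourier hμ
      ⟨fun x => (f x : ℂ), by fun_prop⟩)
  simpa only [Function.comp_def, ContinuousMap.coe_mk, integral_complex_ofReal,
    Complex.ofReal_re] using this

end Weyl

section UnitInterval

variable {g : ℝ → ℝ} (hg : Continuous g) (h01 : g 0 = g 1)

noncomputable def liftIcoContinuousMap : C(AddCircle (1 : ℝ), ℝ) :=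
  ⟨liftIco 1 0 g, liftIco_zero_continuous h01 hg.continuousOn⟩

include hg h01

lemma liftIcoContinuousMap_coe (x : ℝ) :
    liftIcoContinuousMap hg h01 x = g (Int.fract x) := by
  rw [← coe_fract x]
  exact liftIco_zero_coe_apply ⟨Int.fract_nonneg x, Int.fract_lt_one x⟩

lemma integral_liftIcoContinuousMap :
    ∫ z, liftIcoContinuousMap hg h01 z ∂haarAddCircle = ∫ u in (0 : ℝ)..1, g u := by
  rw [integral_haarAddCircle, inv_one, one_smul, ← AddCircle.intervalIntegral_preimage 1 0,
    zero_add]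
  refine intervalIntegral.integral_congr fun u hu => ?_
  rw [Set.uIcc_of_le zero_le_one] at hu
  rcases hu.2.eq_or_lt with rfl | hu1
  · simp [liftIcoContinuousMap_coe, h01]
  · simp [liftIcoContinuousMap_coe, Int.fract_eq_self.2 ⟨hu.1, hu1⟩]

end UnitInterval

lemma tendsto_of_approx_squeeze {α ι : Type*} [TopologicalSpace α] [LinearOrder α]
    [OrderTopology α] {l : Filter ι} {u : ι → α} {a : α} {lo hi : ℕ → ι → α} {b c : ℕ → α}
    (hlo : ∀ k, Tendsto (lo k) l (𝓝 (b k))) (hhi : ∀ k, Tendsto (hi k) l (𝓝 (c k)))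
    (hb : Tendsto b atTop (𝓝 a)) (hc : Tendsto c atTop (𝓝 a))
    (hlou : ∀ k i, lo k i ≤ u i) (huhi : ∀ k i, u i ≤ hi k i) :
    Tendsto u l (𝓝 a) := by
  refine tendsto_order.2 ⟨fun a' ha' => ?_, fun a' ha' => ?_⟩
  · obtain ⟨k, hk⟩ := ((tendsto_order.1 hb).1 a' ha').exists
    exact ((tendsto_order.1 (hlo k)).1 a' hk).mono fun i hi => hi.trans_le (hlou k i)
  · obtain ⟨k, hk⟩ := ((tendsto_order.1 hc).2 a' ha').exists
    exact ((tendsto_order.1 (hhi k)).2 a' hk).mono fun i hi => (huhi k i).trans_lt hi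

lemma mul_floor_mul_div_sub (c y : ℝ) : c * (⌊c * y⌋ / c - y) = -Int.fract (c * y) := by
  rcases eq_or_ne c 0 with rfl | hc
  · simp
  · rw [mul_sub, mul_div_cancel₀ _ hc, ← Int.self_sub_floor]
    ring

lemma integral_zero_one_sub_pow (k : ℕ) :
    ∫ u in (0 : ℝ)..1, (u - u ^ (k + 1)) = 1 / 2 - 1 / ((k + 1 : ℕ) + 1) := by
  rw [intervalIntegral.integral_sub intervalIntegral.intervalIntegrable_id
    (intervalIntegral.intervalIntegrable_pow _), integral_id, integral_pow]
  push_cast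
  ring

lemma integral_zero_one_add_one_sub_pow (k : ℕ) :
    ∫ u in (0 : ℝ)..1, (u + (1 - u) ^ (k + 1)) = 1 / 2 + 1 / ((k + 1 : ℕ) + 1) := by
  rw [intervalIntegral.integral_add intervalIntegral.intervalIntegrable_id
    ((by fun_prop : Continuous fun u : ℝ => (1 - u) ^ (k + 1)).intervalIntegrable _ _),
    integral_id, intervalIntegral.integral_comp_sub_left (fun u => u ^ (k + 1)), integral_pow]
  push_cast
  ring

lemma tendsto_natCast_mul_cocompact {c : ℝ} (hc : c ≠ 0) :
    Tendsto (fun n : ℕ => c * n) atTop (cocompact ℝ) :=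
  (tendsto_cocompact_mul_left₀ hc).comp <| tendsto_natCast_atTop_atTop.mono_right <| by
    rw [cocompact_eq_atBot_atTop]
    exact le_sup_right

lemma integrable_comp_fract {Ω : Type*} [MeasurableSpace Ω] {P : Measure Ω} [IsFiniteMeasure P]
    {g : ℝ → ℝ} (hg : Continuous g) {Z : Ω → ℝ} (hZ : Measurable Z) :
    Integrable (fun ω => g (Int.fract (Z ω))) P := by
  obtain ⟨C, hC⟩ :=
    isCompact_Icc.exists_bound_of_continuousOn (hg.continuousOn (s := Set.Icc 0 1))
  exact .of_bound (hg.measurable.comp (measurable_fract.comp hZ)).aestronglyMeasurable C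
    (ae_of_all _ fun ω => hC _ ⟨Int.fract_nonneg _, (Int.fract_lt_one _).le⟩)

section Rajchman

variable {Ω : Type*} [MeasurableSpace Ω] {P : Measure Ω} [IsProbabilityMeasure P] {Y : Ω → ℝ}
  (hY : Measurable Y)
  (hRaj : Tendsto (fun u : ℝ => ∫ ω, Complex.exp (Complex.I * (u * Y ω)) ∂P) (cocompact ℝ) (𝓝 0))
include hY hRaj

theorem tendsto_integral_coe_natCast_mul (f : C(AddCircle (1 : ℝ), ℝ)) :
    Tendsto (fun n : ℕ => ∫ ω, f ((n * Y ω : ℝ) : AddCircle (1 : ℝ)) ∂P) atTop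
      (𝓝 (∫ x, f x ∂haarAddCircle)) := by
  set X : ℕ → Ω → AddCircle (1 : ℝ) := fun n ω => (n * Y ω : ℝ)
  have hX (n : ℕ) : Measurable (X n) := AddCircle.measurable_mk'.comp (hY.const_mul _)
  have (n : ℕ) := Measure.isProbabilityMeasure_map (μ := P) (hX n).aemeasurable
  have hfourier (k : ℤ) (hk : k ≠ 0) :
      Tendsto (fun n => ∫ x, fourier k x ∂P.map (X n)) atTop (𝓝 0) := by
    have hk' : 2 * Real.pi * k ≠ 0 := by simp [Real.pi_ne_zero, hk]
    refine (hRaj.comp (tendsto_natCast_mul_cocompact hk')).congr fun n => ?_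
    rw [Function.comp_apply, integral_map (hX n).aemeasurable
      (fourier k).continuous.aestronglyMeasurable]
    congr 1 with ω
    rw [fourier_coe_apply]
    push_cast
    ring_nf
  simpa only [integral_map (hX _).aemeasurable f.continuous.aestronglyMeasurable] using
    tendsto_integral_haarAddCircle_of_tendsto_integral_fourier_real hfourier f

theorem tendsto_integral_comp_fract_natCast_mul {g : ℝ → ℝ} (hg : Continuous g)
    (h01 : g 0 = g 1) :
    Tendsto (fun n : ℕ => ∫ ω, g (Int.fract (n * Y ω)) ∂P) atTop
      (𝓝 (∫ u in (0 : ℝ)..1, g u)) := by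
  simpa only [liftIcoContinuousMap_coe, integral_liftIcoContinuousMap] using
    tendsto_integral_coe_natCast_mul hY hRaj (liftIcoContinuousMap hg h01)

/-- On `[0, 1]`, `u - u ^ (k + 1) ≤ u ≤ u + (1 - u) ^ (k + 1)`, and both bounds take the same
value at `0` and `1`. -/
theorem tendsto_integral_fract_natCast_mul :
    Tendsto (fun n : ℕ => ∫ ω, Int.fract (n * Y ω) ∂P) atTop (𝓝 (1 / 2)) := by
  have hZ (n : ℕ) : Measurable fun ω => (n : ℝ) * Y ω := hY.const_mul _
  have hlim : Tendsto (fun k : ℕ => 1 / (((k + 1 : ℕ) : ℝ) + 1)) atTop (𝓝 0) :=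
    tendsto_one_div_add_atTop_nhds_zero_nat.comp (tendsto_add_atTop_nat 1)
  refine tendsto_of_approx_squeeze
    (fun k => tendsto_integral_comp_fract_natCast_mul hY hRaj
      (g := fun u => u - u ^ (k + 1)) (by fun_prop) (by simp))
    (fun k => tendsto_integral_comp_fract_natCast_mul hY hRaj
      (g := fun u => u + (1 - u) ^ (k + 1)) (by fun_prop) (by simp))
    ?_ ?_ (fun k n => ?_) (fun k n => ?_)
  · simpa only [integral_zero_one_sub_pow, sub_zero] using tendsto_const_nhds.sub hlim
  · simpa only [integral_zero_one_add_one_sub_pow, add_zero] using tendsto_const_nhds.add hlim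
  · refine integral_mono (integrable_comp_fract (g := fun u => u - u ^ (k + 1)) (by fun_prop)
      (hZ n)) (integrable_comp_fract continuous_id (hZ n)) fun ω =>
      sub_le_self _ (pow_nonneg (Int.fract_nonneg _) _)
  · refine integral_mono (integrable_comp_fract continuous_id (hZ n))
      (integrable_comp_fract (g := fun u => u + (1 - u) ^ (k + 1)) (by fun_prop) (hZ n))
      fun ω => le_add_of_nonneg_right (pow_nonneg (sub_nonneg.2 (Int.fract_lt_one _).le) _)

/-- With `c = F (-1) - F 0`, the function `u ↦ F (-u) - c * u` takes the same value at `0` and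
`1`, so `F (-fract x)` is a continuous function of `x` modulo `1` plus `c * fract x`. -/
theorem tendsto_integral_comp_neg_fract_natCast_mul (F : BoundedContinuousFunction ℝ ℝ) :
    Tendsto (fun n : ℕ => ∫ ω, F (-Int.fract (n * Y ω)) ∂P) atTop
      (𝓝 (∫ u in Set.Icc (0 : ℝ) 1, F (-u))) := by
  set c := F (-1) - F 0
  have hZ (n : ℕ) : Measurable fun ω => (n : ℝ) * Y ω := hY.const_mul _
  have hg : Continuous fun u => F (-u) - c * u := by fun_prop
  have hsplit (n : ℕ) : ∫ ω, F (-Int.fract (n * Y ω)) ∂P =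
      ∫ ω, (F (-Int.fract (n * Y ω)) - c * Int.fract (n * Y ω)) ∂P +
        c * ∫ ω, Int.fract (n * Y ω) ∂P := by
    rw [← integral_const_mul, ← integral_add (integrable_comp_fract hg (hZ n))
      ((integrable_comp_fract (g := fun u => u) continuous_id (hZ n)).const_mul c)]
    simp
  have hlimit : ∫ u in Set.Icc (0 : ℝ) 1, F (-u) =
      (∫ u in (0 : ℝ)..1, (F (-u) - c * u)) + c * (1 / 2) := by
    rw [intervalIntegral.integral_sub
      ((by fun_prop : Continuous fun u => F (-u)).intervalIntegrable _ _)
      (intervalIntegral.intervalIntegrable_id.const_mul c), intervalIntegral.integral_const_mul,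
      integral_id, integral_Icc_eq_integral_Ioc, ← intervalIntegral.integral_of_le zero_le_one]
    ring
  rw [funext hsplit, hlimit]
  exact (tendsto_integral_comp_fract_natCast_mul hY hRaj hg (by simp [c])).add
    ((tendsto_integral_fract_natCast_mul hY hRaj).const_mul c)

end Rajchman

theorem stmt9_general {Ω : Type*} [MeasurableSpace Ω] (P : Measure Ω) [IsProbabilityMeasure P]
    (Y : Ω → ℝ) (hY : Measurable Y)
    (hRaj : Tendsto (fun u : ℝ => ∫ ω, Complex.exp (Complex.I * (u * Y ω)) ∂P)
      (cocompact ℝ) (nhds 0))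
    (Yn : ℕ → Ω → ℝ) (hYn : ∀ n ω, Yn n ω = (⌊(n:ℝ) * Y ω⌋ : ℝ) / n) :
    (∀ F : BoundedContinuousFunction ℝ ℝ,
        Tendsto (fun n : ℕ => ∫ ω, F ((n:ℝ) * (Yn n ω - Y ω)) ∂P)
          atTop (nhds (∫ u in Set.Icc (0:ℝ) 1, F (-u)))) ∧
      Tendsto (fun n : ℕ => ∫ ω, (n:ℝ) * (Yn n ω - Y ω) ∂P)
        atTop (nhds (-(1/2))) := by
  have hfract (n : ℕ) (ω : Ω) : (n : ℝ) * (Yn n ω - Y ω) = -Int.fract (n * Y ω) := by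
    rw [hYn, mul_floor_mul_div_sub]
  simp only [hfract, integral_neg]
  exact ⟨tendsto_integral_comp_neg_fract_natCast_mul hY hRaj,
    (tendsto_integral_fract_natCast_mul hY hRaj).neg⟩

/-- If `Y` is bounded with Rajchman law and `Y_n^{(d)} = ⌊nY⌋/n` is its
approximation by default, then `n(Y_n^{(d)} − Y)` converges in law to `−U`, `U`
uniform on `[0,1]`, and `E[n(Y_n^{(d)} − Y)] → −1/2`. -/
theorem stmt9 {Ω : Type*} [MeasurableSpace Ω] (P : Measure Ω) [IsProbabilityMeasure P]
    (Y : Ω → ℝ) (hY : Measurable Y) (C : ℝ) (hbdd : ∀ ω, |Y ω| ≤ C)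
    (hRaj : Tendsto (fun u : ℝ => ∫ ω, Complex.exp (Complex.I * (u * Y ω)) ∂P)
      (cocompact ℝ) (nhds 0))
    (Yn : ℕ → Ω → ℝ) (hYn : ∀ n ω, Yn n ω = (⌊(n:ℝ) * Y ω⌋ : ℝ) / n) :
    (∀ F : BoundedContinuousFunction ℝ ℝ,
        Tendsto (fun n : ℕ => ∫ ω, F ((n:ℝ) * (Yn n ω - Y ω)) ∂P)
          atTop (nhds (∫ u in Set.Icc (0:ℝ) 1, F (-u)))) ∧
      Tendsto (fun n : ℕ => ∫ ω, (n:ℝ) * (Yn n ω - Y ω) ∂P)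
        atTop (nhds (-(1/2))) :=
  stmt9_general P Y hY hRaj Yn hYn
end

section
/- Let R_n be the isometry of L²_ℂ of the Wiener space acting on the k-th Wiener chaos by multiplying the kernel integrand by Π_{p=1}^k e^{(i/n)θ(ns_p)}, where θ is a bounded 1-periodic function with ∫₀¹θ = 0 and ∫₀¹θ² = 1. Then for X in the k-th Wiener chaos, ‖n(R_n(X) − X)‖²_{L²} ≤ k² ‖X‖²_{L²} ‖θ‖²_∞, and consequently for X in the domain of the Ornstein–Uhlenbeck operator A, ‖n(R_n(X) − X)‖_{L²} ≤ 2 ‖AX‖_{L²} ‖θ‖_∞. -/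
/-!
Since `‖e^{ix} - 1‖ ≤ |x|`, the phase defect obeys
`n ‖e^{(i/n) Σ_p θ(n s_p)} - 1‖ ≤ Σ_p |θ(n s_p)| ≤ k C` pointwise on the simplex, which gives
the bound on the `k`-th chaos after integrating against `‖f̂‖²`. Writing `k² C² = (2C)² (k/2)²`
and summing over the chaos decomposition gives the bound in terms of `‖AX‖²`.
-/

open MeasureTheory Filter

/-- The increasing simplex `{0 ≤ s₁ < ⋯ < s_k ≤ 1}` parametrising the `k`-th
Wiener chaos: `X = ∫_{s₁<⋯<s_k} f̂ dB_{s₁}⋯dB_{s_k}` with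
`‖X‖²_{L²} = ∫_Δ |f̂|²`. -/
def chaosSimplex (k : ℕ) : Set (Fin k → ℝ) :=
  {s | (∀ i, s i ∈ Set.Icc (0:ℝ) 1) ∧ ∀ i j : Fin k, i < j → s i < s j}

theorem sq_mul_norm_exp_I_div_mul_sub_one_le (r t : ℝ) :
    r ^ 2 * ‖Complex.exp (Complex.I / r * t) - 1‖ ^ 2 ≤ t ^ 2 := by
  rcases eq_or_ne r 0 with rfl | hr
  · simpa using sq_nonneg t
  have hexp : Complex.I / r * t = Complex.I * ((t / r : ℝ) : ℂ) := by
    push_cast; ring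
  have hnorm : ‖Complex.exp (Complex.I / r * t) - 1‖ ^ 2 ≤ (t / r) ^ 2 := by
    rw [hexp, ← sq_abs (t / r), ← Real.norm_eq_abs]
    gcongr
    exact Real.norm_exp_I_mul_ofReal_sub_one_le
  calc r ^ 2 * ‖Complex.exp (Complex.I / r * t) - 1‖ ^ 2 ≤ r ^ 2 * (t / r) ^ 2 := by gcongr
    _ = t ^ 2 := by field_simp

theorem sq_mul_norm_exp_I_div_mul_sum_sub_one_le {k : ℕ} {C : ℝ} (r : ℝ) (a : Fin k → ℝ)
    (ha : ∀ p, |a p| ≤ C) :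
    r ^ 2 * ‖Complex.exp (Complex.I / r * ∑ p, (a p : ℂ)) - 1‖ ^ 2 ≤ (k * C) ^ 2 := by
  have hsum : |∑ p, a p| ≤ k * C := by
    calc |∑ p, a p| ≤ ∑ p, |a p| := Finset.abs_sum_le_sum_abs _ _
      _ ≤ ∑ _p : Fin k, C := Finset.sum_le_sum fun p _ => ha p
      _ = k * C := by simp
  calc r ^ 2 * ‖Complex.exp (Complex.I / r * ∑ p, (a p : ℂ)) - 1‖ ^ 2 ≤ (∑ p, a p) ^ 2 := by
        exact_mod_cast sq_mul_norm_exp_I_div_mul_sub_one_le r (∑ p, a p)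
    _ ≤ (k * C) ^ 2 := sq_le_sq' (abs_le.mp hsum).1 (abs_le.mp hsum).2

theorem integral_sq_norm_mul_le_mul_integral {α E : Type*} [MeasurableSpace α]
    [NormedAddCommGroup E] {μ : Measure α} {f : α → E} (hf : MemLp f 2 μ) {w : α → ℝ} {M : ℝ}
    (hw0 : ∀ x, 0 ≤ w x) (hwM : ∀ x, w x ≤ M) :
    ∫ x, ‖f x‖ ^ 2 * w x ∂μ ≤ M * ∫ x, ‖f x‖ ^ 2 ∂μ := by
  have hint : Integrable (fun x => ‖f x‖ ^ 2) μ := hf.integrable_norm_pow two_ne_zero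
  rw [← integral_const_mul]
  refine integral_mono_of_nonneg (Eventually.of_forall fun x => ?_) (hint.const_mul M)
    (Eventually.of_forall fun x => ?_)
  · exact mul_nonneg (sq_nonneg _) (hw0 x)
  · simpa only [mul_comm M] using mul_le_mul_of_nonneg_left (hwM x) (sq_nonneg ‖f x‖)

theorem sq_mul_integral_norm_sq_mul_phase_sub_one_le {k : ℕ} {θ : ℝ → ℝ} {C : ℝ}
    (hθ : ∀ x, |θ x| ≤ C) (r : ℝ) {μ : Measure (Fin k → ℝ)} {E : Type*} [NormedAddCommGroup E]
    {f : (Fin k → ℝ) → E} (hf : MemLp f 2 μ) :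
    r ^ 2 * ∫ s, ‖f s‖ ^ 2 * ‖Complex.exp (Complex.I / r * ∑ p, (θ (r * s p) : ℂ)) - 1‖ ^ 2 ∂μ
      ≤ k ^ 2 * C ^ 2 * ∫ s, ‖f s‖ ^ 2 ∂μ := by
  rw [← integral_const_mul, ← mul_pow]
  simp_rw [mul_left_comm (r ^ 2) (‖_‖ ^ 2)]
  exact integral_sq_norm_mul_le_mul_integral hf (fun s => by positivity)
    fun s => sq_mul_norm_exp_I_div_mul_sum_sub_one_le r _ fun p => hθ _

theorem tsum_le_mul_tsum_of_nonneg_of_le {ι : Type*} {f g : ι → ℝ} {c : ℝ}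
    (hf0 : ∀ i, 0 ≤ f i) (hfg : ∀ i, f i ≤ c * g i) (hg : Summable g) :
    ∑' i, f i ≤ c * ∑' i, g i := by
  have hcg : Summable fun i => c * g i := hg.mul_left c
  rw [← tsum_mul_left]
  exact (hcg.of_nonneg_of_le hf0 hfg).tsum_le_tsum hfg hcg

theorem stmt15_general (θ : ℝ → ℝ) (C : ℝ) (hθb : ∀ x, |θ x| ≤ C)
    (n : ℕ) :
    (∀ (k : ℕ) (f : (Fin k → ℝ) → ℂ), MemLp f 2 (volume.restrict (chaosSimplex k)) →
      (n:ℝ) ^ 2 * ∫ s in chaosSimplex k,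
          ‖f s‖ ^ 2 * ‖Complex.exp ((Complex.I / n) * ∑ p, (θ ((n:ℝ) * s p) : ℂ)) - 1‖ ^ 2
        ≤ (k:ℝ) ^ 2 * C ^ 2 * ∫ s in chaosSimplex k, ‖f s‖ ^ 2) ∧
    (∀ g : (k : ℕ) → (Fin k → ℝ) → ℂ,
      (∀ k, MemLp (g k) 2 (volume.restrict (chaosSimplex k))) →
      -- `X ∈ 𝒟(A)`: `‖AX‖² = Σ_k (k/2)² ‖X_k‖² < ∞`
      Summable (fun k : ℕ => ((k:ℝ) / 2) ^ 2 * ∫ s in chaosSimplex k, ‖g k s‖ ^ 2) →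
      ∑' k : ℕ, (n:ℝ) ^ 2 * ∫ s in chaosSimplex k,
          ‖g k s‖ ^ 2 * ‖Complex.exp ((Complex.I / n) * ∑ p, (θ ((n:ℝ) * s p) : ℂ)) - 1‖ ^ 2
        ≤ (2 * C) ^ 2 *
          ∑' k : ℕ, ((k:ℝ) / 2) ^ 2 * ∫ s in chaosSimplex k, ‖g k s‖ ^ 2) := by
  have hchaos : ∀ k (f : (Fin k → ℝ) → ℂ), MemLp f 2 (volume.restrict (chaosSimplex k)) → _ :=
    fun k f hf => sq_mul_integral_norm_sq_mul_phase_sub_one_le hθb (n : ℝ) hf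
  simp only [Complex.ofReal_natCast] at hchaos
  refine ⟨hchaos, fun g hg hsum =>
    tsum_le_mul_tsum_of_nonneg_of_le (fun k => ?_) (fun k => ?_) hsum⟩
  · exact mul_nonneg (sq_nonneg _) (integral_nonneg fun s => by positivity)
  · exact (hchaos k (g k) (hg k)).trans_eq (by ring)

/-- for the isometry `R_n` multiplying the `k`-th chaos kernel by
`Π_p e^{(i/n)θ(ns_p)}`, one has `‖n(R_n X − X)‖² ≤ k²‖X‖²‖θ‖²_∞` on the `k`-th
chaos (expressed through the kernels, `‖n(R_nX−X)‖² = n²∫_Δ |f̂|²|e^{(i/n)Σθ(ns_p)}−1|²`),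
and consequently `‖n(R_n X − X)‖ ≤ 2‖AX‖‖θ‖_∞` for `X` in the domain of the
Ornstein–Uhlenbeck operator `A` (which multiplies the `k`-th chaos by `−k/2`),
expressed through the full chaos decomposition `g`. -/
theorem stmt15 (θ : ℝ → ℝ) (hθm : Measurable θ) (C : ℝ) (hθb : ∀ x, |θ x| ≤ C)
    (hper : Function.Periodic θ 1)
    (h0 : ∫ x in (0:ℝ)..1, θ x = 0) (h2 : ∫ x in (0:ℝ)..1, (θ x) ^ 2 = 1)
    (n : ℕ) (hn : 1 ≤ n) :
    (∀ (k : ℕ) (f : (Fin k → ℝ) → ℂ), MemLp f 2 (volume.restrict (chaosSimplex k)) →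
      (n:ℝ) ^ 2 * ∫ s in chaosSimplex k,
          ‖f s‖ ^ 2 * ‖Complex.exp ((Complex.I / n) * ∑ p, (θ ((n:ℝ) * s p) : ℂ)) - 1‖ ^ 2
        ≤ (k:ℝ) ^ 2 * C ^ 2 * ∫ s in chaosSimplex k, ‖f s‖ ^ 2) ∧
    (∀ g : (k : ℕ) → (Fin k → ℝ) → ℂ,
      (∀ k, MemLp (g k) 2 (volume.restrict (chaosSimplex k))) →
      -- `X ∈ 𝒟(A)`: `‖AX‖² = Σ_k (k/2)² ‖X_k‖² < ∞`
      Summable (fun k : ℕ => ((k:ℝ) / 2) ^ 2 * ∫ s in chaosSimplex k, ‖g k s‖ ^ 2) →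
      ∑' k : ℕ, (n:ℝ) ^ 2 * ∫ s in chaosSimplex k,
          ‖g k s‖ ^ 2 * ‖Complex.exp ((Complex.I / n) * ∑ p, (θ ((n:ℝ) * s p) : ℂ)) - 1‖ ^ 2
        ≤ (2 * C) ^ 2 *
          ∑' k : ℕ, ((k:ℝ) / 2) ^ 2 * ∫ s in chaosSimplex k, ‖g k s‖ ^ 2) :=
  stmt15_general θ C hθb n
end
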